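/- Let m ≥ 1, c ≥ 1 real, and let φ : ℤ/mℤ → ℂ satisfy: ‖φ‖_∞ ≤ c, and there is a set D ⊆ ℤ/mℤ with |D| ≤ c such that |C(φ,a)| ≤ c·√m for all a ∉ D. Then for every interval I ⊆ ℤ/mℤ, one has |∑_{n∈I} φ(n)| ≤ 2·c^{4/3}·( m^{1/3}|I|^{1/3} + 2·m^{1/6}|I|^{2/3} ). -/

import Mathlib

open Finset

/-- An interval in `ZMod m`: the injective reduction mod `m` of an interval of
consecutive integers. -/
def IsInterval {m : ℕ} (I : Finset (ZMod m)) : Prop :=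
  ∃ a b : ℤ, Set.InjOn (Int.cast : ℤ → ZMod m) (Finset.Icc a b : Set ℤ) ∧
    I = (Finset.Icc a b).image (Int.cast : ℤ → ZMod m)

/-- The additive autocorrelation of `φ` at shift `a`. -/
noncomputable def corr {m : ℕ} [NeZero m] (φ : ZMod m → ℂ) (a : ZMod m) : ℂ :=
  ∑ x : ZMod m, φ x * (starRingEnd ℂ) (φ (x + a))

/-! Weyl differencing. Averaging the sum over the shifts `0 ≤ h < H` costs at most `c H²` and
replaces `φ` by the window sums `T x = ∑_{h<H} φ (x + h)`. By Cauchy–Schwarz `‖∑_{x ∈ I} T x‖²`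
is at most `|I| ∑_x ‖T x‖²`, and expanding the square gives `∑_{h,h'<H} C(φ, h' - h)`. At most
`|D|` terms per row are exceptional (and bounded trivially by `c² m`), so the whole thing is at most
`H (c³ m + H c √m)`. Then take `H ≈ (c m |I|)^{1/3}`. For short intervals, `|I|² ≤ 8 c m`, the
trivial bound `c |I|` is already enough. -/

lemma norm_sum_le_card_mul {ι E : Type*} [SeminormedAddCommGroup E] {f : ι → E} {c : ℝ}
    (hf : ∀ i, ‖f i‖ ≤ c) (s : Finset ι) : ‖∑ i ∈ s, f i‖ ≤ #s * c := by
  simpa using norm_sum_le_of_le s fun i _ => hf i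

lemma norm_sum_sq_le_card_mul_sum_norm_sq {G E : Type*} [Fintype G] [SeminormedAddCommGroup E]
    (s : Finset G) (T : G → E) : ‖∑ x ∈ s, T x‖ ^ 2 ≤ #s * ∑ x, ‖T x‖ ^ 2 :=
  calc ‖∑ x ∈ s, T x‖ ^ 2 ≤ (∑ x ∈ s, ‖T x‖) ^ 2 := by gcongr; exact norm_sum_le _ _
    _ ≤ #s * ∑ x ∈ s, ‖T x‖ ^ 2 := sq_sum_le_card_mul_sum_sq
    _ ≤ #s * ∑ x, ‖T x‖ ^ 2 := by gcongr; exact subset_univ s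

lemma sum_range_two_mul_le_sq (H : ℕ) : ∑ h ∈ range H, (2 * h : ℝ) ≤ H ^ 2 := by
  induction H with
  | zero => simp
  | succ n ih => rw [sum_range_succ]; push_cast; nlinarith

section IntegerIntervals

variable {E : Type*} [SeminormedAddCommGroup E] {f : ℤ → E} {c : ℝ}

lemma norm_sum_Icc_sub_sum_Icc_add_le (hf : ∀ t, ‖f t‖ ≤ c) (a b : ℤ) (h : ℕ) :
    ‖∑ t ∈ Icc a b, f t - ∑ t ∈ Icc a b, f (t + h)‖ ≤ 2 * c * h := by
  have hc : 0 ≤ c := (norm_nonneg _).trans (hf 0)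
  have hshift : ∑ t ∈ Icc a b, f (t + h) = ∑ t ∈ Icc (a + h) (b + h), f t := by
    rw [← map_add_right_Icc, sum_map]; rfl
  have hcard {s : Finset ℤ} {x : ℤ} (hs : s ⊆ Ico x (x + h)) : #s ≤ h :=
    (card_le_card hs).trans (by simp)
  have hleft : Icc a b \ Icc (a + h) (b + h) ⊆ Ico a (a + h) := by
    intro t; simp only [mem_sdiff, mem_Icc, mem_Ico]; omega
  have hright : Icc (a + h) (b + h) \ Icc a b ⊆ Ico (b + 1) (b + 1 + h) := by
    intro t; simp only [mem_sdiff, mem_Icc, mem_Ico]; omega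
  rw [hshift, ← sum_sdiff_sub_sum_sdiff]
  calc _ ≤ ‖∑ t ∈ Icc a b \ Icc (a + h) (b + h), f t‖
        + ‖∑ t ∈ Icc (a + h) (b + h) \ Icc a b, f t‖ := norm_sub_le _ _
    _ ≤ h * c + h * c := by
        gcongr
        · exact (norm_sum_le_card_mul hf _).trans (by gcongr; exact hcard hleft)
        · exact (norm_sum_le_card_mul hf _).trans (by gcongr; exact hcard hright)
    _ = 2 * c * h := by ring

lemma norm_nsmul_sum_Icc_sub_sum_window_le (hf : ∀ t, ‖f t‖ ≤ c) (a b : ℤ) (H : ℕ) :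
    ‖H • ∑ t ∈ Icc a b, f t - ∑ t ∈ Icc a b, ∑ h ∈ range H, f (t + h)‖ ≤ c * H ^ 2 := by
  have hc : 0 ≤ c := (norm_nonneg _).trans (hf 0)
  have hsplit : H • ∑ t ∈ Icc a b, f t - ∑ t ∈ Icc a b, ∑ h ∈ range H, f (t + h) =
      ∑ h ∈ range H, (∑ t ∈ Icc a b, f t - ∑ t ∈ Icc a b, f (t + h)) := by
    rw [sum_sub_distrib, sum_const, card_range, sum_comm]
  rw [hsplit]
  calc _ ≤ ∑ h ∈ range H, 2 * c * h :=
        norm_sum_le_of_le _ fun h _ => norm_sum_Icc_sub_sum_Icc_add_le hf a b h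
    _ = c * ∑ h ∈ range H, (2 * h : ℝ) := by rw [mul_sum]; ring_nf
    _ ≤ c * H ^ 2 := by gcongr; exact sum_range_two_mul_le_sq H

end IntegerIntervals

section Autocorrelation

variable {m : ℕ} [NeZero m] {φ : ZMod m → ℂ} {c : ℝ} {D : Finset (ZMod m)}

lemma norm_corr_le (hφ : ∀ x, ‖φ x‖ ≤ c) (a : ZMod m) : ‖corr φ a‖ ≤ m * c ^ 2 := by
  have hc : 0 ≤ c := (norm_nonneg _).trans (hφ 0)
  have hterm (x : ZMod m) : ‖φ x * (starRingEnd ℂ) (φ (x + a))‖ ≤ c ^ 2 := by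
    rw [norm_mul, Complex.norm_conj, sq]; exact mul_le_mul (hφ _) (hφ _) (norm_nonneg _) hc
  simpa [corr, ZMod.card] using norm_sum_le_card_mul hterm univ

lemma sum_norm_sq_window_sum_eq (φ : ZMod m → ℂ) (K : Finset (ZMod m)) :
    ((∑ x, ‖∑ k ∈ K, φ (x + k)‖ ^ 2 : ℝ) : ℂ) = ∑ k ∈ K, ∑ k' ∈ K, corr φ (k' - k) := by
  push_cast
  simp_rw [← Complex.mul_conj', map_sum, sum_mul_sum]
  rw [sum_comm]
  refine sum_congr rfl fun k _ => ?_
  rw [sum_comm]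
  refine sum_congr rfl fun k' _ => ?_
  exact Fintype.sum_equiv (Equiv.addRight k) _ _ fun x => by simp [add_assoc]

lemma sum_norm_corr_sub_le (hφ : ∀ x, ‖φ x‖ ≤ c) (hcorr : ∀ a ∉ D, ‖corr φ a‖ ≤ c * √m)
    (K : Finset (ZMod m)) (k : ZMod m) :
    ∑ k' ∈ K, ‖corr φ (k' - k)‖ ≤ #D * (m * c ^ 2) + #K * (c * √m) := by
  rw [← sum_filter_add_sum_filter_not K (fun k' => k' - k ∈ D)]
  gcongr ?_ + ?_
  · calc _ ≤ #(K.filter fun k' => k' - k ∈ D) * (m * c ^ 2) := by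
          simpa using sum_le_sum fun k' (_ : k' ∈ K.filter _) => norm_corr_le hφ (k' - k)
      _ ≤ #D * (m * c ^ 2) := by
          gcongr ?_ * _
          exact_mod_cast card_le_card_of_injOn (· - k) (fun _ hk' => (mem_filter.1 hk').2)
            fun _ _ _ _ => sub_left_inj.1
  · calc _ ≤ #(K.filter fun k' => k' - k ∉ D) * (c * √m) := by
          simpa using sum_le_sum fun k' (hk' : k' ∈ K.filter _) => hcorr _ (mem_filter.1 hk').2
      _ ≤ #K * (c * √m) := by
          have : 0 ≤ c := (norm_nonneg _).trans (hφ 0)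
          gcongr; exact filter_subset _ _

lemma sum_norm_sq_window_sum_le (hφ : ∀ x, ‖φ x‖ ≤ c) (hcorr : ∀ a ∉ D, ‖corr φ a‖ ≤ c * √m)
    (K : Finset (ZMod m)) :
    ∑ x, ‖∑ k ∈ K, φ (x + k)‖ ^ 2 ≤ #K * (#D * (m * c ^ 2) + #K * (c * √m)) :=
  calc ∑ x, ‖∑ k ∈ K, φ (x + k)‖ ^ 2 = ‖((∑ x, ‖∑ k ∈ K, φ (x + k)‖ ^ 2 : ℝ) : ℂ)‖ := by
        rw [Complex.norm_real, Real.norm_of_nonneg (by positivity)]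
    _ = ‖∑ k ∈ K, ∑ k' ∈ K, corr φ (k' - k)‖ := by rw [sum_norm_sq_window_sum_eq]
    _ ≤ ∑ k ∈ K, ∑ k' ∈ K, ‖corr φ (k' - k)‖ :=
        (norm_sum_le _ _).trans (sum_le_sum fun _ _ => norm_sum_le _ _)
    _ ≤ ∑ k ∈ K, (#D * (m * c ^ 2) + #K * (c * √m)) :=
        sum_le_sum fun k _ => sum_norm_corr_sub_le hφ hcorr K k
    _ = #K * (#D * (m * c ^ 2) + #K * (c * √m)) := by rw [sum_const, nsmul_eq_mul]

lemma natCast_mul_norm_sum_Icc_le (hφ : ∀ x, ‖φ x‖ ≤ c)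
    (hcorr : ∀ a ∉ D, ‖corr φ a‖ ≤ c * √m) {a b : ℤ}
    (hinj : Set.InjOn (Int.cast : ℤ → ZMod m) (Icc a b)) {H : ℕ} (hH : H ≤ m) :
    H * ‖∑ t ∈ Icc a b, φ t‖ ≤
      c * H ^ 2 + √(#(Icc a b) * (H * (#D * (m * c ^ 2) + H * (c * √m)))) := by
  have hK : Set.InjOn (Nat.cast : ℕ → ZMod m) (range H) :=
    (CharP.natCast_injOn_Iio (ZMod m) m).mono fun h hh => by simp at hh ⊢; omega
  set K := (range H).image (Nat.cast : ℕ → ZMod m)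
  set T : ZMod m → ℂ := fun x => ∑ k ∈ K, φ (x + k)
  have hT (t : ℤ) : ∑ h ∈ range H, φ ((t + h : ℤ) : ZMod m) = T t := by
    simp only [T, K, sum_image hK]; push_cast; rfl
  have hdiff := norm_nsmul_sum_Icc_sub_sum_window_le (f := fun t : ℤ => φ t) (fun t => hφ t) a b H
  simp only [hT] at hdiff
  have hCS : ‖∑ t ∈ Icc a b, T t‖ ≤ √(#(Icc a b) * ∑ x, ‖T x‖ ^ 2) := by
    rw [← sum_image hinj, ← card_image_of_injOn hinj]
    exact Real.le_sqrt_of_sq_le (norm_sum_sq_le_card_mul_sum_norm_sq _ _)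
  have hmoment := sum_norm_sq_window_sum_le hφ hcorr K
  rw [card_image_of_injOn hK, card_range] at hmoment
  calc H * ‖∑ t ∈ Icc a b, φ t‖ = ‖H • ∑ t ∈ Icc a b, φ t‖ := by
        rw [nsmul_eq_mul, norm_mul, Complex.norm_natCast]
    _ ≤ ‖H • ∑ t ∈ Icc a b, φ t - ∑ t ∈ Icc a b, T t‖ + ‖∑ t ∈ Icc a b, T t‖ :=
        norm_le_norm_sub_add _ _
    _ ≤ _ := add_le_add hdiff (hCS.trans (by gcongr))

end Autocorrelation

noncomputable def intervalSumBound (c M L : ℝ) : ℝ :=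
  2 * c ^ ((4 : ℝ) / 3) * (M ^ ((1 : ℝ) / 3) * L ^ ((1 : ℝ) / 3)
    + 2 * M ^ ((1 : ℝ) / 6) * L ^ ((2 : ℝ) / 3))

lemma pow_rpow_natCast_div {x : ℝ} (hx : 0 ≤ x) {n : ℕ} (hn : n ≠ 0) (k : ℕ) :
    (x ^ n) ^ ((k : ℝ) / n) = x ^ k := by
  rw [← Real.rpow_natCast_mul hx, mul_div_cancel₀ _ (by exact_mod_cast hn), Real.rpow_natCast]

lemma exists_nonneg_pow_six_eq {x : ℝ} (hx : 0 ≤ x) : ∃ r, 0 ≤ r ∧ x = r ^ 6 :=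
  ⟨x ^ ((6 : ℕ)⁻¹ : ℝ), by positivity, (Real.rpow_inv_natCast_pow hx (by norm_num)).symm⟩

-- Writing `c, M, L` as sixth powers turns every estimate below into a polynomial inequality.
lemma intervalSumBound_pow_six {r u v : ℝ} (hr : 0 ≤ r) (hu : 0 ≤ u) (hv : 0 ≤ v) :
    intervalSumBound (r ^ 6) (u ^ 6) (v ^ 6) = 2 * r ^ 8 * (u ^ 2 * v ^ 2 + 2 * u * v ^ 4) := by
  have h {x : ℝ} (hx : 0 ≤ x) (k : ℕ) := pow_rpow_natCast_div hx (n := 6) (by norm_num) k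
  rw [intervalSumBound, show (4 : ℝ) / 3 = ((8 : ℕ) : ℝ) / ((6 : ℕ) : ℝ) by norm_num,
    show (1 : ℝ) / 3 = ((2 : ℕ) : ℝ) / ((6 : ℕ) : ℝ) by norm_num,
    show (1 : ℝ) / 6 = ((1 : ℕ) : ℝ) / ((6 : ℕ) : ℝ) by norm_num,
    show (2 : ℝ) / 3 = ((4 : ℕ) : ℝ) / ((6 : ℕ) : ℝ) by norm_num, h hr, h hu, h hv, h hu, h hv]
  ring

lemma mul_le_intervalSumBound {c M L : ℝ} (hc : 0 ≤ c) (hM : 0 ≤ M) (hL : 0 ≤ L)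
    (h : L ^ 2 ≤ 8 * c * M) : L * c ≤ intervalSumBound c M L := by
  obtain ⟨r, hr, rfl⟩ := exists_nonneg_pow_six_eq hc
  obtain ⟨u, hu, rfl⟩ := exists_nonneg_pow_six_eq hM
  obtain ⟨v, hv, rfl⟩ := exists_nonneg_pow_six_eq hL
  rw [intervalSumBound_pow_six hr hu hv]
  have hv4 : v ^ 4 ≤ 2 * r ^ 2 * u ^ 2 := by
    refine (pow_le_pow_iff_left₀ (by positivity) (by positivity) (by norm_num : 3 ≠ 0)).mp ?_
    linarith [show (v ^ 4) ^ 3 = (v ^ 6) ^ 2 by ring,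
      show (2 * r ^ 2 * u ^ 2) ^ 3 = 8 * r ^ 6 * u ^ 6 by ring]
  calc v ^ 6 * r ^ 6 = r ^ 6 * v ^ 2 * v ^ 4 := by ring
    _ ≤ r ^ 6 * v ^ 2 * (2 * r ^ 2 * u ^ 2) := by gcongr
    _ ≤ 2 * r ^ 8 * (u ^ 2 * v ^ 2 + 2 * u * v ^ 4) := by
        nlinarith [show 0 ≤ r ^ 8 * u * v ^ 4 by positivity]

lemma le_add_sqrt_of_mul_le {c M L P H S : ℝ} (hc : 0 ≤ c) (hL : 0 ≤ L)
    (hP : 0 ≤ P) (hP3 : P ^ 3 = c * M * L) (hPH : P ≤ H) (hH : 0 < H)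
    (hS : H * S ≤ c * H ^ 2 + √(L * (H * (c * (M * c ^ 2) + H * (c * √M))))) :
    S ≤ c * H + c * P + √(c * L * √M) := by
  have hsqrt : √(L * (H * (c * (M * c ^ 2) + H * (c * √M)))) ≤ H * (c * P + √(c * L * √M)) := by
    rw [Real.sqrt_le_left (by positivity)]
    have hX := Real.sq_sqrt (by positivity : 0 ≤ c * L * √M)
    have hcube : L * (H * (c * (M * c ^ 2))) ≤ H ^ 2 * (c * P) ^ 2 := by
      calc L * (H * (c * (M * c ^ 2))) = H * c ^ 2 * P ^ 2 * P := by
            linear_combination (-(H * c ^ 2)) * hP3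
        _ ≤ H * c ^ 2 * P ^ 2 * H := by gcongr
        _ = H ^ 2 * (c * P) ^ 2 := by ring
    nlinarith [show 0 ≤ H ^ 2 * (c * P) * √(c * L * √M) by positivity]
  refine le_of_mul_le_mul_left ?_ hH
  nlinarith

lemma three_mul_add_sqrt_le_intervalSumBound {c M L : ℝ} (hc : 1 ≤ c) (hM : 0 ≤ M) (hL : 0 ≤ L)
    (hML : M ≤ L ^ 2) :
    3 * (c * (c * M * L) ^ ((1 : ℝ) / 3)) + √(c * L * √M) ≤ intervalSumBound c M L := by
  obtain ⟨r, hr, rfl⟩ := exists_nonneg_pow_six_eq (zero_le_one.trans hc)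
  obtain ⟨u, hu, rfl⟩ := exists_nonneg_pow_six_eq hM
  obtain ⟨v, hv, rfl⟩ := exists_nonneg_pow_six_eq hL
  have hcbrt : (r ^ 6 * u ^ 6 * v ^ 6) ^ ((1 : ℝ) / 3) = r ^ 2 * u ^ 2 * v ^ 2 := by
    rw [← mul_pow, ← mul_pow, show (1 : ℝ) / 3 = ((2 : ℕ) : ℝ) / ((6 : ℕ) : ℝ) by norm_num,
      pow_rpow_natCast_div (by positivity) (by norm_num), mul_pow, mul_pow]
  rw [intervalSumBound_pow_six hr hu hv, hcbrt, show u ^ 6 = (u ^ 3) ^ 2 by ring,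
    Real.sqrt_sq (by positivity)]
  have hr1 : 1 ≤ r := (one_le_pow_iff_of_nonneg hr (by norm_num)).mp hc
  have huv : u ≤ v ^ 2 := by
    refine (pow_le_pow_iff_left₀ hu (by positivity) (by norm_num : 6 ≠ 0)).mp ?_
    linarith [show (v ^ 2) ^ 6 = (v ^ 6) ^ 2 by ring, show (u ^ 3) ^ 2 = u ^ 6 by ring]
  have hsqrt : √(r ^ 6 * v ^ 6 * u ^ 3) ≤ r ^ 8 * u * v ^ 4 := by
    rw [Real.sqrt_le_left (by positivity)]
    have hu' : u ≤ r ^ 10 * v ^ 2 :=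
      huv.trans (le_mul_of_one_le_left (by positivity) (one_le_pow₀ hr1))
    have := mul_le_mul_of_nonneg_left hu' (by positivity : 0 ≤ r ^ 6 * u ^ 2 * v ^ 6)
    nlinarith
  have hcP : r ^ 8 * u ^ 2 * v ^ 2 ≤ r ^ 8 * u * v ^ 4 := by
    have := mul_le_mul_of_nonneg_left huv (by positivity : 0 ≤ r ^ 8 * u * v ^ 2)
    nlinarith
  nlinarith [show 0 ≤ r ^ 8 * u * v ^ 4 by positivity]

lemma le_intervalSumBound_of_mul_le {c M L H S : ℝ} (hc : 1 ≤ c) (hM : 0 ≤ M) (hL : 0 ≤ L)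
    (hML : M ≤ L ^ 2) (hPH : (c * M * L) ^ ((1 : ℝ) / 3) ≤ H)
    (hHP : H ≤ 2 * (c * M * L) ^ ((1 : ℝ) / 3)) (hH : 0 < H)
    (hS : H * S ≤ c * H ^ 2 + √(L * (H * (c * (M * c ^ 2) + H * (c * √M))))) :
    S ≤ intervalSumBound c M L := by
  have hc0 : 0 ≤ c := zero_le_one.trans hc
  have hP3 : ((c * M * L) ^ ((1 : ℝ) / 3)) ^ 3 = c * M * L := by
    rw [show (1 : ℝ) / 3 = ((3 : ℕ) : ℝ)⁻¹ by norm_num]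
    exact Real.rpow_inv_natCast_pow (by positivity) (by norm_num)
  set P := (c * M * L) ^ ((1 : ℝ) / 3)
  calc S ≤ c * H + c * P + √(c * L * √M) :=
        le_add_sqrt_of_mul_le hc0 hL (by positivity) hP3 hPH hH hS
    _ ≤ 3 * (c * P) + √(c * L * √M) := by nlinarith
    _ ≤ intervalSumBound c M L := three_mul_add_sqrt_le_intervalSumBound hc hM hL hML

lemma exists_nat_cbrt_le_le_two_mul {c L : ℝ} {m : ℕ} (hc : 1 ≤ c) (hL : 0 ≤ L) (hLm : L ≤ m)
    (hlarge : 8 * c * m < L ^ 2) :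
    ∃ H : ℕ, 0 < H ∧ H ≤ m ∧ (c * m * L) ^ ((1 : ℝ) / 3) ≤ H ∧
      (H : ℝ) ≤ 2 * (c * m * L) ^ ((1 : ℝ) / 3) := by
  set P := (c * m * L) ^ ((1 : ℝ) / 3)
  have hL8 : 8 < L := by nlinarith
  have hP1 : 1 ≤ P := Real.one_le_rpow
    (one_le_mul_of_one_le_of_one_le (one_le_mul_of_one_le_of_one_le hc (by linarith)) (by linarith))
    (by norm_num)
  have hPm : P ≤ m :=
    calc P ≤ ((m : ℝ) ^ 3) ^ ((1 : ℝ) / 3) :=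
          Real.rpow_le_rpow (by positivity) (by nlinarith [pow_le_pow_left₀ hL hLm 3]) (by norm_num)
      _ = m := by
          rw [show (1 : ℝ) / 3 = ((1 : ℕ) : ℝ) / ((3 : ℕ) : ℝ) by norm_num,
            pow_rpow_natCast_div (by positivity) (by norm_num), pow_one]
  exact ⟨⌈P⌉₊, Nat.ceil_pos.2 (by linarith), Nat.ceil_le.2 hPm, Nat.le_ceil P,
    by linarith [Nat.ceil_lt_add_one (by linarith : 0 ≤ P)]⟩

theorem sliding_sum_condition_H (m : ℕ) [NeZero m] (c : ℝ) (hc : 1 ≤ c)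
    (φ : ZMod m → ℂ) (hφ : ∀ x, ‖φ x‖ ≤ c)
    (D : Finset (ZMod m)) (hD : (D.card : ℝ) ≤ c)
    (hcorr : ∀ a : ZMod m, a ∉ D → ‖corr φ a‖ ≤ c * Real.sqrt m)
    (I : Finset (ZMod m)) (hI : IsInterval I) :
    ‖∑ n ∈ I, φ n‖ ≤
      2 * c ^ ((4 : ℝ) / 3) * ((m : ℝ) ^ ((1 : ℝ) / 3) * (I.card : ℝ) ^ ((1 : ℝ) / 3)
        + 2 * (m : ℝ) ^ ((1 : ℝ) / 6) * (I.card : ℝ) ^ ((2 : ℝ) / 3)) := by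
  obtain ⟨a, b, hinj, rfl⟩ := hI
  rw [sum_image hinj, card_image_of_injOn hinj]
  change _ ≤ intervalSumBound c m #(Icc a b)
  have hLm : (#(Icc a b) : ℝ) ≤ m := by
    exact_mod_cast (card_le_card_of_injOn _ (fun _ _ => mem_univ _) hinj).trans_eq (ZMod.card m)
  by_cases hshort : (#(Icc a b) : ℝ) ^ 2 ≤ 8 * c * m
  · exact (norm_sum_le_card_mul (f := fun t : ℤ => φ t) (fun t => hφ t) _).trans
      (mul_le_intervalSumBound (by linarith) (by positivity) (by positivity) hshort)
  rw [not_le] at hshort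
  obtain ⟨H, hH, hHm, hPH, hHP⟩ := exists_nat_cbrt_le_le_two_mul hc (by positivity) hLm hshort
  refine le_intervalSumBound_of_mul_le hc (by positivity) (by positivity) (by nlinarith) hPH hHP
    (by exact_mod_cast hH) ((natCast_mul_norm_sum_Icc_le hφ hcorr hinj hHm).trans ?_)
  gcongr
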